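/- arXiv:1706.02894 — 3 statements merged into one kernel-verified Lean document; each statement's English description precedes it below -/
import Mathlib

section
/- If K and L have the same strong homotopy type via maps φ : K → L, ψ : L → K, and Ω ⊆ K Π K is a Farber subcomplex, then the preimage Λ = (ψ²)⁻¹(Ω) ⊆ L Π L is a Farber subcomplex of L Π L. -/
attribute [local instance] Classical.decEq

/-- An abstract simplicial complex on vertex set `V`. -/
structure SC (V : Type) where
  faces : Set (Finset V)
  down_closed : ∀ {σ τ : Finset V}, σ ∈ faces → τ ⊆ σ → τ.Nonempty → τ ∈ faces

/-- A vertex map inducing a simplicial map `K → L`. -/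
def IsSimplicialMap {V W : Type} (K : SC V) (L : SC W) (f : V → W) : Prop :=
  ∀ σ ∈ K.faces, σ.image f ∈ L.faces

/-- Two maps are contiguous: for each simplex, the union of images is a simplex. -/
def Contiguous {V W : Type} (K : SC V) (L : SC W) (f g : V → W) : Prop :=
  ∀ σ ∈ K.faces, σ.image f ∪ σ.image g ∈ L.faces

/-- Being in the same contiguity class: connected by a finite chain of contiguous maps. -/
def ContigClass {V W : Type} (K : SC V) (L : SC W) : (V → W) → (V → W) → Prop :=
  Relation.ReflTransGen (Contiguous K L)

/-- The categorical product of two simplicial complexes. -/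
def prodSC {V W : Type} (K : SC V) (L : SC W) : SC (V × W) where
  faces := {σ | σ.image Prod.fst ∈ K.faces ∧ σ.image Prod.snd ∈ L.faces}
  down_closed := fun hσ hτσ hne =>
    ⟨K.down_closed hσ.1 (Finset.image_subset_image hτσ) (hne.image _),
     L.down_closed hσ.2 (Finset.image_subset_image hτσ) (hne.image _)⟩

/-- `Ω` is a Farber subcomplex of `K Π K`: a subcomplex admitting a simplicial map
`s : Ω → K` with `Δ ∘ s` in the contiguity class of the inclusion. -/
def IsFarber {V : Type} (K : SC V) (Ω : SC (V × V)) : Prop :=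
  Ω.faces ⊆ (prodSC K K).faces ∧
  ∃ s : V × V → V, IsSimplicialMap Ω K s ∧
    ContigClass Ω (prodSC K K) (fun p => (s p, s p)) id

/-- `K Π K` is covered by `n + 1` Farber subcomplexes. -/
def TCle {V : Type} (K : SC V) (n : ℕ) : Prop :=
  ∃ Ω : Fin (n + 1) → SC (V × V), (∀ i, IsFarber K (Ω i)) ∧
    ∀ σ ∈ (prodSC K K).faces, ∃ i, σ ∈ (Ω i).faces

/-- Discrete topological complexity. -/
noncomputable def TCdisc {V : Type} (K : SC V) : ℕ∞ :=
  sInf {n : ℕ∞ | ∃ m : ℕ, n = (m : ℕ∞) ∧ TCle K m}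

/-- A categorical subcomplex: the inclusion is in the contiguity class of a constant map
at a vertex of `K`. -/
def IsCategorical {V : Type} (K : SC V) (L : SC V) : Prop :=
  L.faces ⊆ K.faces ∧ ∃ v : V, {v} ∈ K.faces ∧ ContigClass L K id (fun _ => v)

/-- `K` is covered by `n + 1` categorical subcomplexes. -/
def scatLe {V : Type} (K : SC V) (n : ℕ) : Prop :=
  ∃ L : Fin (n + 1) → SC V, (∀ i, IsCategorical K (L i)) ∧
    ∀ σ ∈ K.faces, ∃ i, σ ∈ (L i).faces

/-- Normalized simplicial LS-category. -/
noncomputable def scat {V : Type} (K : SC V) : ℕ∞ :=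
  sInf {n : ℕ∞ | ∃ m : ℕ, n = (m : ℕ∞) ∧ scatLe K m}

/-- The preimage subcomplex of a subcomplex `Ω` under a vertex map `f`,
inside an ambient complex `M`. -/
def preimSC {V W : Type} (M : SC W) (Ω : SC V) (f : W → V) : SC W where
  faces := {τ | τ ∈ M.faces ∧ τ.image f ∈ Ω.faces}
  down_closed := fun hσ hτσ hne =>
    ⟨M.down_closed hσ.1 hτσ hne,
     Ω.down_closed hσ.2 (Finset.image_subset_image hτσ) (hne.image _)⟩

/-- `K` and `L` have the same strong homotopy type. -/
def StrongEquiv {V W : Type} (K : SC V) (L : SC W) : Prop :=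
  ∃ (φ : V → W) (ψ : W → V), IsSimplicialMap K L φ ∧ IsSimplicialMap L K ψ ∧
    ContigClass L L (φ ∘ ψ) id ∧ ContigClass K K (ψ ∘ φ) id

/-- `K` is edge-path connected. -/
def EdgeConn {V : Type} (K : SC V) : Prop :=
  ∀ v w : V, {v} ∈ K.faces → {w} ∈ K.faces →
    Relation.ReflTransGen (fun a b => ({a, b} : Finset V) ∈ K.faces) v w

/-- `K` is strongly collapsible: the identity is in the contiguity class of a constant map. -/
def StronglyCollapsible {V : Type} (K : SC V) : Prop :=
  ∃ v : V, {v} ∈ K.faces ∧ ContigClass K K id (fun _ => v)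

/-! The preimage of Ω under ψ × ψ gets the section `φ ∘ s ∘ (ψ × ψ)`: applying φ × φ to the
contiguity chain from `Δ ∘ s` to the inclusion of Ω gives a chain from `Δ ∘ φ ∘ s ∘ (ψ × ψ)` to
`(φ ∘ ψ) × (φ ∘ ψ)`, and the chain `φ ∘ ψ ∼ id` on each factor continues it to the inclusion. -/

section

variable {U V W X U' : Type} {K : SC V} {L : SC W} {M : SC X}

theorem IsSimplicialMap.comp {f : V → W} {g : W → X} (hg : IsSimplicialMap L M g)
    (hf : IsSimplicialMap K L f) : IsSimplicialMap K M (g ∘ f) := fun σ hσ => by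
  simpa only [Finset.image_image] using hg _ (hf σ hσ)

theorem IsSimplicialMap.prodMap {K' : SC U} {L' : SC U'} {f : V → W} {f' : U → U'}
    (hf : IsSimplicialMap K L f) (hf' : IsSimplicialMap K' L' f') :
    IsSimplicialMap (prodSC K K') (prodSC L L') (Prod.map f f') := fun σ hσ =>
  ⟨by simpa only [Finset.image_image, Prod.map_fst'] using hf _ hσ.1,
    by simpa only [Finset.image_image, Prod.map_snd'] using hf' _ hσ.2⟩

theorem preimSC_faces_subset (Ω : SC V) (f : X → V) : (preimSC M Ω f).faces ⊆ M.faces :=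
  fun _ hτ => hτ.1

theorem isSimplicialMap_preimSC (Ω : SC V) (f : X → V) : IsSimplicialMap (preimSC M Ω f) Ω f :=
  fun _ hτ => hτ.2

namespace ContigClass

theorem comp_left {f g : V → W} {h : W → X} (hh : IsSimplicialMap L M h)
    (hfg : ContigClass K L f g) : ContigClass K M (h ∘ f) (h ∘ g) :=
  hfg.lift (h ∘ ·) fun _ _ hab σ hσ => by
    simpa only [Finset.image_union, Finset.image_image] using hh _ (hab σ hσ)

theorem comp_right {J : SC U} {f g : V → W} {h : U → V} (hh : IsSimplicialMap J K h)
    (hfg : ContigClass K L f g) : ContigClass J L (f ∘ h) (g ∘ h) :=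
  hfg.lift (· ∘ h) fun _ _ hab σ hσ => by
    simpa only [Finset.image_image] using hab _ (hh σ hσ)

theorem mono {K' : SC V} {f g : V → W} (hK : K'.faces ⊆ K.faces) (hfg : ContigClass K L f g) :
    ContigClass K' L f g :=
  Relation.ReflTransGen.mono (fun _ _ hab σ hσ => hab σ (hK hσ)) _ _ hfg

theorem prodMap_self {f g : V → W} (hfg : ContigClass K L f g) :
    ContigClass (prodSC K K) (prodSC L L) (Prod.map f f) (Prod.map g g) :=
  hfg.lift (fun m => Prod.map m m) fun _ _ hab σ hσ =>
    ⟨by simpa only [Finset.image_union, Finset.image_image, Prod.map_fst'] using hab _ hσ.1,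
      by simpa only [Finset.image_union, Finset.image_image, Prod.map_snd'] using hab _ hσ.2⟩

end ContigClass

end

theorem isFarber_preimage_general {V W : Type} (K : SC V) (L : SC W) (φ : V → W) (ψ : W → V)
    (hφ : IsSimplicialMap K L φ)
    (h1 : ContigClass L L (φ ∘ ψ) id)
    (Ω : SC (V × V)) (hΩ : IsFarber K Ω) :
    IsFarber L (preimSC (prodSC L L) Ω (Prod.map ψ ψ)) := by
  obtain ⟨-, s, hs, hsΔ⟩ := hΩ
  have hΛ := preimSC_faces_subset (M := prodSC L L) Ω (Prod.map ψ ψ)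
  have hψ2 := isSimplicialMap_preimSC (M := prodSC L L) Ω (Prod.map ψ ψ)
  refine ⟨hΛ, φ ∘ s ∘ Prod.map ψ ψ, hφ.comp (hs.comp hψ2), ?_⟩
  have hsection : ContigClass (preimSC (prodSC L L) Ω (Prod.map ψ ψ)) (prodSC L L)
      (fun p => (φ (s (Prod.map ψ ψ p)), φ (s (Prod.map ψ ψ p)))) (Prod.map (φ ∘ ψ) (φ ∘ ψ)) :=
    ((hsΔ.comp_left (hφ.prodMap hφ)).comp_right hψ2 :)
  have hidentity := h1.prodMap_self.mono hΛ
  rw [Prod.map_id] at hidentity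
  exact hsection.trans hidentity

/-- the preimage of a Farber subcomplex under a strong homotopy
equivalence is a Farber subcomplex. -/
theorem isFarber_preimage {V W : Type} (K : SC V) (L : SC W) (φ : V → W) (ψ : W → V)
    (hφ : IsSimplicialMap K L φ) (hψ : IsSimplicialMap L K ψ)
    (h1 : ContigClass L L (φ ∘ ψ) id) (h2 : ContigClass K K (ψ ∘ φ) id)
    (Ω : SC (V × V)) (hΩ : IsFarber K Ω) :
    IsFarber L (preimSC (prodSC L L) Ω (Prod.map ψ ψ)) :=
  isFarber_preimage_general K L φ ψ hφ h1 Ω hΩ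
end

section
/- If K is an edge-path connected abstract simplicial complex, then TC(K) ≤ scat(K Π K), where TC is the discrete topological complexity and scat the simplicial LS-category. -/
attribute [local instance] Classical.decEq

/-! Proof idea: a categorical subcomplex `Ω ⊆ K Π K` deforms to a vertex `(v₀, v₁)`. Take the
constant section `s = v₀`; then `Δ ∘ s` is constant at `(v₀, v₀)`. Since `K Π K` is edge-path
connected and constant maps at adjacent vertices are contiguous, this constant map lies in the
contiguity class of the constant map at `(v₀, v₁)`, hence of the inclusion of `Ω`. So every
categorical subcomplex of `K Π K` is a Farber subcomplex. -/

section Simplicial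

variable {V W : Type} {K : SC V} {L : SC W}

theorem Contiguous.symm {f g : V → W} (h : Contiguous K L f g) : Contiguous K L g f := by
  intro σ hσ
  simpa only [Finset.union_comm] using h σ hσ

theorem ContigClass.symm {f g : V → W} (h : ContigClass K L f g) : ContigClass K L g f :=
  Relation.ReflTransGen.mono (fun _ _ => Contiguous.symm) _ _ (Relation.ReflTransGen.swap _ _ h)

theorem isSimplicialMap_const {w : W} (hw : {w} ∈ L.faces)
    (hempty : ∅ ∈ K.faces → ∅ ∈ L.faces) : IsSimplicialMap K L (fun _ => w) := by
  intro σ hσ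
  rcases σ.eq_empty_or_nonempty with rfl | hne
  · simpa using hempty hσ
  · rwa [Finset.image_const hne]

theorem contiguous_const {a b : W} (hab : ({a, b} : Finset W) ∈ L.faces)
    (hempty : ∅ ∈ K.faces → ∅ ∈ L.faces) : Contiguous K L (fun _ => a) (fun _ => b) := by
  intro σ hσ
  rcases σ.eq_empty_or_nonempty with rfl | hne
  · simpa using hempty hσ
  · rwa [Finset.image_const hne, Finset.image_const hne, ← Finset.insert_eq]

theorem EdgeConn.contigClass_const (hL : EdgeConn L) (hempty : ∅ ∈ K.faces → ∅ ∈ L.faces)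
    {a b : W} (ha : {a} ∈ L.faces) (hb : {b} ∈ L.faces) :
    ContigClass K L (fun _ => a) (fun _ => b) :=
  Relation.ReflTransGen.lift (fun w (_ : V) => w)
    (fun _ _ hxy => contiguous_const hxy hempty) _ _ (hL a b ha hb)

theorem singleton_mem_prodSC {a : V} {b : W} :
    ({(a, b)} : Finset (V × W)) ∈ (prodSC K L).faces ↔ {a} ∈ K.faces ∧ {b} ∈ L.faces := by
  simp [prodSC]

theorem EdgeConn.prodSC (hK : EdgeConn K) (hL : EdgeConn L) : EdgeConn (prodSC K L) := by
  rintro ⟨a, b⟩ ⟨a', b'⟩ hab hab'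
  obtain ⟨ha, hb⟩ := singleton_mem_prodSC.1 hab
  obtain ⟨ha', hb'⟩ := singleton_mem_prodSC.1 hab'
  refine .trans (b := (a', b)) ?_ ?_
  · exact Relation.ReflTransGen.lift (fun x => (x, b))
      (fun x y hxy => by simpa [Function.onFun, _root_.prodSC] using And.intro hxy hb) _ _
      (hK a a' ha ha')
  · exact Relation.ReflTransGen.lift (fun y => (a', y))
      (fun x y hxy => by simpa [Function.onFun, _root_.prodSC] using And.intro ha' hxy) _ _
      (hL b b' hb hb')

theorem IsCategorical.isFarber (hK : EdgeConn K) {Ω : SC (V × V)}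
    (hΩ : IsCategorical (prodSC K K) Ω) : IsFarber K Ω := by
  obtain ⟨hsub, ⟨v₀, v₁⟩, hv, hc⟩ := hΩ
  have hv₀ := (singleton_mem_prodSC.1 hv).1
  refine ⟨hsub, fun _ => v₀, isSimplicialMap_const hv₀ fun h => by simpa using (hsub h).1, ?_⟩
  exact ((EdgeConn.prodSC hK hK).contigClass_const (fun h => hsub h)
    (singleton_mem_prodSC.2 ⟨hv₀, hv₀⟩) hv).trans hc.symm

theorem TCle_of_scatLe_prodSC (hK : EdgeConn K) {m : ℕ}
    (hm : scatLe (prodSC K K) m) : TCle K m := by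
  obtain ⟨Ω, hcat, hcov⟩ := hm
  exact ⟨Ω, fun i => (hcat i).isFarber hK, hcov⟩

end Simplicial

/-- for edge-path connected `K`, `TC K ≤ scat (K Π K)`. -/
theorem TCdisc_le_scat_prod {V : Type} (K : SC V) (h : EdgeConn K) :
    TCdisc K ≤ scat (prodSC K K) := by
  apply sInf_le_sInf
  rintro _ ⟨m, rfl, hm⟩
  exact ⟨m, rfl, TCle_of_scatLe_prodSC h hm⟩
end

section
/- Let X be a topological space and U ⊆ X × X an open subset. The following are equivalent: (1) there is a continuous section s : U → PX of the path fibration π : PX → X × X; (2) the restrictions to U of the two projections p₁, p₂ : X × X → X are homotopic; (3) p₁|_U (equivalently p₂|_U) is a homotopic section of the diagonal Δ_X : X → X × X, i.e., Δ_X∘(p₁|_U) is homotopic to the inclusion U ⊆ X × X. -/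
open unitInterval in
/-- `f` and `g` are homotopic: there is a continuous homotopy between them. -/
def Htpy {A B : Type} [TopologicalSpace A] [TopologicalSpace B] (f g : A → B) : Prop :=
  ∃ H : C(A × I, B), (∀ a, H (a, 0) = f a) ∧ (∀ a, H (a, 1) = g a)

/-- The Švarc genus of `f` is at most `n`: the codomain has an open cover by `n + 1`
sets each admitting a continuous strict local section. -/
def SecatLe {X Y : Type} [TopologicalSpace X] [TopologicalSpace Y] (f : X → Y) (n : ℕ) : Prop :=
  ∃ V : Fin (n + 1) → Set Y, (∀ i, IsOpen (V i)) ∧ (∀ y, ∃ i, y ∈ V i) ∧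
    ∀ i, ∃ s : (V i) → X, Continuous s ∧ ∀ y : V i, f (s y) = (y : Y)

/-- The homotopic Švarc genus of `f` is at most `n`: open cover by `n + 1` sets each
admitting a continuous local homotopic section. -/
def HSecatLe {X Y : Type} [TopologicalSpace X] [TopologicalSpace Y] (f : X → Y) (n : ℕ) : Prop :=
  ∃ V : Fin (n + 1) → Set Y, (∀ i, IsOpen (V i)) ∧ (∀ y, ∃ i, y ∈ V i) ∧
    ∀ i, ∃ s : (V i) → X, Continuous s ∧
      Htpy (fun y : V i => f (s y)) (fun y : V i => (y : Y))

/-- The Švarc genus. -/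
noncomputable def secat {X Y : Type} [TopologicalSpace X] [TopologicalSpace Y]
    (f : X → Y) : ℕ∞ :=
  sInf {n : ℕ∞ | ∃ m : ℕ, n = (m : ℕ∞) ∧ SecatLe f m}

/-- The homotopic Švarc genus. -/
noncomputable def hsecat {X Y : Type} [TopologicalSpace X] [TopologicalSpace Y]
    (f : X → Y) : ℕ∞ :=
  sInf {n : ℕ∞ | ∃ m : ℕ, n = (m : ℕ∞) ∧ HSecatLe f m}

open unitInterval in
/-- The homotopy lifting property with respect to all spaces. -/
def IsFibration {E B : Type} [TopologicalSpace E] [TopologicalSpace B] (p : E → B) : Prop :=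
  ∀ (Z : Type) (_ : TopologicalSpace Z) (H : C(Z × I, B)) (h : Z → E), Continuous h →
    (∀ z, p (h z) = H (z, 0)) →
    ∃ G : C(Z × I, E), (∀ z, G (z, 0) = h z) ∧ ∀ q, p (G q) = H q

open unitInterval in
/-- The path fibration `PX → X × X`, sending a path to its endpoints. -/
def pathFib (X : Type) [TopologicalSpace X] : C(I, X) → X × X :=
  fun γ => (γ 0, γ 1)

/-- Farber's (normalized) topological complexity of a space. -/
noncomputable def TCtop (X : Type) [TopologicalSpace X] : ℕ∞ :=
  secat (pathFib X)


/-!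
A continuous family of paths over `U` is, by the exponential law for the locally compact
interval, the same thing as a homotopy `U × I → X`; requiring the paths to run from `u.1` to
`u.2` makes it a homotopy from `p₁|_U` to `p₂|_U`. A homotopy into `X × X` is a pair of
homotopies, so `Δ ∘ p₁|_U ≃ incl` means `p₁|_U ≃ p₁|_U` (always true) together with
`p₁|_U ≃ p₂|_U`, and symmetrically for `p₂`.
-/

open unitInterval

section Htpy

variable {A B C : Type} [TopologicalSpace A] [TopologicalSpace B] [TopologicalSpace C]

theorem Htpy.refl {f : A → B} (hf : Continuous f) : Htpy f f :=
  ⟨⟨fun p => f p.1, hf.comp continuous_fst⟩, fun _ => rfl, fun _ => rfl⟩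

theorem Htpy.symm {f g : A → B} (h : Htpy f g) : Htpy g f := by
  obtain ⟨H, h0, h1⟩ := h
  refine ⟨H.comp ⟨fun p => (p.1, σ p.2), by fun_prop⟩, fun a => ?_, fun a => ?_⟩
  · simpa using h1 a
  · simpa using h0 a

theorem Htpy.comp_left (φ : C(B, C)) {f g : A → B} (h : Htpy f g) :
    Htpy (fun a => φ (f a)) (fun a => φ (g a)) := by
  obtain ⟨H, h0, h1⟩ := h
  exact ⟨φ.comp H, fun a => congrArg φ (h0 a), fun a => congrArg φ (h1 a)⟩

theorem htpy_prod_iff {f g : A → B × C} :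
    Htpy f g ↔ Htpy (fun a => (f a).1) (fun a => (g a).1) ∧
      Htpy (fun a => (f a).2) (fun a => (g a).2) := by
  refine ⟨fun h => ⟨h.comp_left .fst, h.comp_left .snd⟩, ?_⟩
  rintro ⟨⟨H₁, h₁0, h₁1⟩, ⟨H₂, h₂0, h₂1⟩⟩
  exact ⟨H₁.prodMk H₂, fun a => Prod.ext (h₁0 a) (h₂0 a), fun a => Prod.ext (h₁1 a) (h₂1 a)⟩

end Htpy

theorem exists_pathFib_lift_iff_htpy {A X : Type} [TopologicalSpace A] [TopologicalSpace X]
    (e : A → X × X) :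
    (∃ s : A → C(I, X), Continuous s ∧ ∀ a, pathFib X (s a) = e a) ↔
      Htpy (fun a => (e a).1) (fun a => (e a).2) := by
  constructor
  · rintro ⟨s, hs, hsec⟩
    exact ⟨ContinuousMap.uncurry ⟨s, hs⟩, fun a => (Prod.ext_iff.mp (hsec a)).1,
      fun a => (Prod.ext_iff.mp (hsec a)).2⟩
  · rintro ⟨H, h0, h1⟩
    exact ⟨fun a => H.curry a, H.curry.continuous, fun a => Prod.ext (h0 a) (h1 a)⟩

open unitInterval in
theorem pathFib_section_iff_general (X : Type) [TopologicalSpace X] (U : Set (X × X)) :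
    ((∃ s : U → C(I, X), Continuous s ∧ ∀ u : U, pathFib X (s u) = (u : X × X)) ↔
      Htpy (fun u : U => (u : X × X).1) (fun u : U => (u : X × X).2)) ∧
    ((∃ s : U → C(I, X), Continuous s ∧ ∀ u : U, pathFib X (s u) = (u : X × X)) ↔
      Htpy (fun u : U => ((u : X × X).1, (u : X × X).1)) (fun u : U => (u : X × X))) ∧
    ((∃ s : U → C(I, X), Continuous s ∧ ∀ u : U, pathFib X (s u) = (u : X × X)) ↔
      Htpy (fun u : U => ((u : X × X).2, (u : X × X).2)) (fun u : U => (u : X × X))) := by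
  have hsection := exists_pathFib_lift_iff_htpy ((↑) : U → X × X)
  have hp₁ : Continuous fun u : U => (u : X × X).1 := by fun_prop
  have hp₂ : Continuous fun u : U => (u : X × X).2 := by fun_prop
  refine ⟨hsection, hsection.trans ?_, hsection.trans ?_⟩
  · rw [htpy_prod_iff (f := fun u : U => ((u : X × X).1, (u : X × X).1))]
    exact (and_iff_right (Htpy.refl hp₁)).symm
  · rw [htpy_prod_iff (f := fun u : U => ((u : X × X).2, (u : X × X).2))]
    exact ⟨fun h => ⟨h.symm, Htpy.refl hp₂⟩, fun h => h.1.symm⟩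

open unitInterval in
/-- equivalent conditions for an open `U ⊆ X × X`: a section of the
path fibration over `U` exists iff the two projections restricted to `U` are homotopic,
iff either projection restricted to `U` is a homotopic section of the diagonal. -/
theorem pathFib_section_iff (X : Type) [TopologicalSpace X] (U : Set (X × X))
    (hU : IsOpen U) :
    ((∃ s : U → C(I, X), Continuous s ∧ ∀ u : U, pathFib X (s u) = (u : X × X)) ↔
      Htpy (fun u : U => (u : X × X).1) (fun u : U => (u : X × X).2)) ∧
    ((∃ s : U → C(I, X), Continuous s ∧ ∀ u : U, pathFib X (s u) = (u : X × X)) ↔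
      Htpy (fun u : U => ((u : X × X).1, (u : X × X).1)) (fun u : U => (u : X × X))) ∧
    ((∃ s : U → C(I, X), Continuous s ∧ ∀ u : U, pathFib X (s u) = (u : X × X)) ↔
      Htpy (fun u : U => ((u : X × X).2, (u : X × X).2)) (fun u : U => (u : X × X))) :=
  pathFib_section_iff_general X U
end
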